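/- arXiv:1807.05417 — 2 statements merged into one kernel-verified Lean document; each statement's English description precedes it below -/
import Mathlib

section
/- Let (X,d,m) be a metric measure space, p ∈ (1,∞), and let D be a D-structure on (X,d,m) that is strongly local in the sense of Shanmugalingam. Then D is pointwise local, i.e. it satisfies properties L1 and L5. -/
open Filter Set
open scoped ENNReal NNReal Topology

noncomputable section

namespace AxSob

variable {X : Type*} [MetricSpace X] [MeasurableSpace X]

/-- The quantity `∫_B |u|^p dm`. -/
def lpIntOn (m : MeasureTheory.Measure X) (p : ℝ) (u : X → ℝ) (B : Set X) : ℝ≥0∞ :=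
  ∫⁻ x in B, ENNReal.ofReal |u x| ^ p ∂m

/-- `u` belongs to `L^p(m)`. -/
def LpMem (m : MeasureTheory.Measure X) (p : ℝ) (u : X → ℝ) : Prop :=
  Measurable u ∧ lpIntOn m p u Set.univ < ∞

/-- `u` belongs to `L^p_loc(m)`: it is Borel and `p`-integrable on every bounded Borel set. -/
def LpLocMem (m : MeasureTheory.Measure X) (p : ℝ) (u : X → ℝ) : Prop :=
  Measurable u ∧ ∀ B : Set X, MeasurableSet B → Bornology.IsBounded B → lpIntOn m p u B < ∞

/-- Convergence in `L^p(m)`. -/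
def LpTendsto (m : MeasureTheory.Measure X) (p : ℝ) (g : ℕ → X → ℝ) (g₀ : X → ℝ) : Prop :=
  Tendsto (fun n => lpIntOn m p (fun x => g n x - g₀ x) Set.univ) atTop (𝓝 0)

/-- Convergence in `L^p_loc(m)`. -/
def LpLocTendsto (m : MeasureTheory.Measure X) (p : ℝ) (u : ℕ → X → ℝ) (u₀ : X → ℝ) : Prop :=
  ∀ B : Set X, MeasurableSet B → Bornology.IsBounded B →
    Tendsto (fun n => lpIntOn m p (fun x => u n x - u₀ x) B) atTop (𝓝 0)

/-- `u` belongs to `L^∞(m)`. -/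
def LinfMem (m : MeasureTheory.Measure X) (u : X → ℝ) : Prop :=
  Measurable u ∧ ∃ C : ℝ, ∀ᵐ x ∂m, |u x| ≤ C

/-- A `D`-structure (à la Gol'dshtein–Troyanov) on a metric measure space `(X, d, m)`,
with exponent `p`.  To every function `u` (thought of as an element of `L^p_loc(m)`) it
associates the family `D u` of its pseudo-gradients: non-negative Borel functions,
considered up to `m`-a.e. equality, satisfying the axioms A1–A5. -/
structure DStructure (X : Type*) [MetricSpace X] [MeasurableSpace X]
    (m : MeasureTheory.Measure X) (p : ℝ) where
  D : (X → ℝ) → Set (X → ℝ)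
  measurable_of_mem : ∀ u g, g ∈ D u → Measurable g
  nonneg_of_mem : ∀ u g, g ∈ D u → 0 ≤ g
  /-- `D` is defined on `L^p_loc(m)`, i.e. on `m`-a.e. equivalence classes. -/
  congr_ae : ∀ u v : X → ℝ, u =ᵐ[m] v → D u = D v
  /-- pseudo-gradients are considered up to `m`-a.e. equality. -/
  mem_congr_ae : ∀ u g h : X → ℝ, g ∈ D u → g =ᵐ[m] h → Measurable h → 0 ≤ h → h ∈ D u
  /-- A1 (non triviality). -/
  axiomA1 : ∀ (u : X → ℝ) (K : ℝ≥0), LpLocMem m p u → 0 ≤ u → LipschitzWith K u →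
    {x | 0 < u x}.indicator (fun _ => (K : ℝ)) ∈ D u
  /-- A2 (upper linearity). -/
  axiomA2 : ∀ (u₁ u₂ g₁ g₂ g : X → ℝ) (α₁ α₂ : ℝ),
    LpLocMem m p u₁ → LpLocMem m p u₂ → g₁ ∈ D u₁ → g₂ ∈ D u₂ →
    Measurable g → 0 ≤ g → (∀ᵐ x ∂m, |α₁| * g₁ x + |α₂| * g₂ x ≤ g x) →
    g ∈ D (fun x => α₁ * u₁ x + α₂ * u₂ x)
  /-- A3 (Leibniz rule). -/
  axiomA3 : ∀ (u g φ : X → ℝ) (K : ℝ≥0) (M : ℝ),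
    LpLocMem m p u → g ∈ D u → LipschitzWith K φ → (∀ x, |φ x| ≤ M) →
    (fun x => g x * M + (K : ℝ) * |u x|) ∈ D (fun x => φ x * u x)
  /-- A4 (lattice property). -/
  axiomA4 : ∀ u₁ u₂ g₁ g₂ : X → ℝ,
    LpLocMem m p u₁ → LpLocMem m p u₂ → g₁ ∈ D u₁ → g₂ ∈ D u₂ →
    (fun x => max (g₁ x) (g₂ x)) ∈ D (fun x => max (u₁ x) (u₂ x)) ∧
    (fun x => max (g₁ x) (g₂ x)) ∈ D (fun x => min (u₁ x) (u₂ x))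
  /-- A5 (completeness). -/
  axiomA5 : ∀ (u g : ℕ → X → ℝ) (u₀ g₀ : X → ℝ),
    (∀ n, LpLocMem m p (u n)) → (∀ n, g n ∈ D (u n)) → (∀ n, LpMem m p (g n)) →
    LpLocMem m p u₀ → Measurable g₀ → 0 ≤ g₀ →
    LpLocTendsto m p u u₀ → LpTendsto m p g g₀ → g₀ ∈ D u₀

namespace DStructure

variable {m : MeasureTheory.Measure X} {p : ℝ}

/-- The `p`-Dirichlet energy `E_p(u|B) = inf { ∫_B g^p dm : g ∈ D[u] }`. -/
def energyOn (S : DStructure X m p) (u : X → ℝ) (B : Set X) : ℝ≥0∞ :=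
  ⨅ (g : X → ℝ) (_ : g ∈ S.D u), lpIntOn m p g B

/-- The `p`-Dirichlet energy `E_p(u) = E_p(u|X)`. -/
def energy (S : DStructure X m p) (u : X → ℝ) : ℝ≥0∞ := S.energyOn u Set.univ

/-- The Sobolev class `S^p(X) = { u ∈ L^p_loc(m) : E_p(u) < ∞ }`. -/
def SobolevClass (S : DStructure X m p) : Set (X → ℝ) :=
  {u | LpLocMem m p u ∧ S.energy u < ∞}

/-- The Sobolev space `W^{1,p}(X) = L^p(m) ∩ S^p(X)`. -/
def W1p (S : DStructure X m p) : Set (X → ℝ) :=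
  {u | LpMem m p u ∧ S.energy u < ∞}

/-- The Sobolev norm `‖u‖ = (‖u‖_{L^p}^p + E_p(u))^{1/p}`. -/
def wNorm (S : DStructure X m p) (u : X → ℝ) : ℝ≥0∞ :=
  (lpIntOn m p u Set.univ + S.energy u) ^ (1 / p)

/-- `g` is the minimal pseudo-gradient of `u`: `g ∈ D[u] ∩ L^p(m)` and
`∫ g^p dm = E_p(u)`. -/
def IsMinimalPG (S : DStructure X m p) (u g : X → ℝ) : Prop :=
  g ∈ S.D u ∧ LpMem m p g ∧ lpIntOn m p g Set.univ = S.energy u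

/-- Property L1: if `u ∈ S^p(X)` is `m`-a.e. constant on a Borel set `B`, then
`E_p(u|B) = 0`. -/
def L1prop (S : DStructure X m p) : Prop :=
  ∀ u ∈ S.SobolevClass, ∀ B : Set X, MeasurableSet B →
    (∃ c : ℝ, ∀ᵐ x ∂(m.restrict B), u x = c) → S.energyOn u B = 0

/-- Property L2: if `u ∈ S^p(X)` is `m`-a.e. constant on a Borel set `B`, then the
minimal pseudo-gradient vanishes `m`-a.e. on `B`. -/
def L2prop (S : DStructure X m p) : Prop :=
  ∀ u ∈ S.SobolevClass, ∀ B : Set X, MeasurableSet B →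
    (∃ c : ℝ, ∀ᵐ x ∂(m.restrict B), u x = c) →
    ∀ g, S.IsMinimalPG u g → ∀ᵐ x ∂(m.restrict B), g x = 0

/-- Property L3: if `u ∈ S^p(X)` and `g ∈ D[u]`, then `χ_{u>0}·g ∈ D[u⁺]`. -/
def L3prop (S : DStructure X m p) : Prop :=
  ∀ u ∈ S.SobolevClass, ∀ g ∈ S.D u,
    {x | 0 < u x}.indicator g ∈ S.D (fun x => max (u x) 0)

/-- Property L4: if `u ∈ S^p(X)` and `g₁, g₂ ∈ D[u]`, then `min{g₁,g₂} ∈ D[u]`. -/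
def L4prop (S : DStructure X m p) : Prop :=
  ∀ u ∈ S.SobolevClass, ∀ g₁ ∈ S.D u, ∀ g₂ ∈ S.D u,
    (fun x => min (g₁ x) (g₂ x)) ∈ S.D u

/-- Property L5: the minimal pseudo-gradient satisfies `Du ≤ g` `m`-a.e. for every
`g ∈ D[u]`. -/
def L5prop (S : DStructure X m p) : Prop :=
  ∀ u ∈ S.SobolevClass, ∀ g, S.IsMinimalPG u g →
    ∀ h ∈ S.D u, ∀ᵐ x ∂m, g x ≤ h x

/-- A pointwise local `D`-structure: it satisfies L1 and L5. -/
def PointwiseLocal (S : DStructure X m p) : Prop := S.L1prop ∧ S.L5prop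

/-- Strong locality in the sense of Shanmugalingam. -/
def ShanmugalingamLocal (S : DStructure X m p) : Prop :=
  ∀ u₁ ∈ S.SobolevClass, ∀ u₂ ∈ S.SobolevClass, ∀ B : Set X, MeasurableSet B →
    (∀ᵐ x ∂(m.restrict B), u₁ x = u₂ x) →
    ∀ g₁ ∈ S.D u₁, ∀ g₂ ∈ S.D u₂,
      (fun x => B.indicator g₁ x + Bᶜ.indicator g₂ x) ∈ S.D u₂

/-- Strong locality in the sense of Timoshin. -/
def TimoshinLocal (S : DStructure X m p) : Prop :=
  ∀ u₁ ∈ S.SobolevClass, ∀ u₂ ∈ S.SobolevClass,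
    ∀ g₁ ∈ S.D u₁, ∀ g₂ ∈ S.D u₂,
      (fun x => {y | u₁ y < u₂ y}.indicator g₁ x + {y | u₂ y < u₁ y}.indicator g₂ x +
        {y | u₁ y = u₂ y}.indicator (fun y => min (g₁ y) (g₂ y)) x)
        ∈ S.D (fun x => min (u₁ x) (u₂ x))

end DStructure

end AxSob

namespace AxSob

open MeasureTheory

variable {X : Type*} [MeasurableSpace X] {m : Measure X} {p : ℝ}

theorem lpIntOn_univ (f : X → ℝ) :
    lpIntOn m p f univ = ∫⁻ x, ENNReal.ofReal |f x| ^ p ∂m := by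
  rw [lpIntOn, Measure.restrict_univ]

theorem lpIntOn_eq_zero_of_eqOn_zero (hp : 0 < p) {f : X → ℝ} {B : Set X}
    (hB : MeasurableSet B) (hf : EqOn f 0 B) : lpIntOn m p f B = 0 := by
  rw [lpIntOn, setLIntegral_congr_fun hB (g := fun _ => 0) fun x hx => by
    simp [hf hx, ENNReal.zero_rpow_of_pos hp]]
  exact lintegral_zero

theorem lpIntOn_mono (hp : 0 ≤ p) {f g : X → ℝ} (hfg : ∀ x, |f x| ≤ |g x|) (B : Set X) :
    lpIntOn m p f B ≤ lpIntOn m p g B :=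
  lintegral_mono fun x => ENNReal.rpow_le_rpow (ENNReal.ofReal_le_ofReal (hfg x)) hp

theorem ae_eq_of_le_of_lpIntOn_le (hp : 0 < p) {f g : X → ℝ} (hf : 0 ≤ f) (hfg : f ≤ g)
    (hg : Measurable g) (hfin : lpIntOn m p f univ ≠ ∞)
    (hle : lpIntOn m p g univ ≤ lpIntOn m p f univ) : f =ᵐ[m] g := by
  have habs : ∀ x, |f x| = f x ∧ |g x| = g x := fun x =>
    ⟨abs_of_nonneg (hf x), abs_of_nonneg ((hf x).trans (hfg x))⟩
  simp only [lpIntOn_univ] at hfin hle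
  have hpow : (fun x => ENNReal.ofReal |f x| ^ p) =ᵐ[m] fun x => ENNReal.ofReal |g x| ^ p :=
    ae_eq_of_ae_le_of_lintegral_le
      (.of_forall fun x => ENNReal.rpow_le_rpow (ENNReal.ofReal_le_ofReal (by
        simpa only [(habs x).1, (habs x).2] using hfg x)) hp.le)
      hfin (hg.abs.ennreal_ofReal.pow_const p).aemeasurable hle
  filter_upwards [hpow] with x hx
  have hofReal := ENNReal.rpow_left_injective hp.ne' hx
  rwa [(habs x).1, (habs x).2, ENNReal.ofReal_eq_ofReal_iff (hf x) ((hf x).trans (hfg x))]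
    at hofReal

variable [MetricSpace X]

theorem measure_lt_top_of_isBounded (hball : ∀ (x : X) (r : ℝ), m (Metric.ball x r) < ∞)
    {B : Set X} (hB : Bornology.IsBounded B) : m B < ∞ := by
  rcases B.eq_empty_or_nonempty with rfl | ⟨x, -⟩
  · simp
  · obtain ⟨r, hr⟩ := hB.subset_ball x
    exact (measure_mono hr).trans_lt (hball x r)

namespace DStructure

variable (S : DStructure X m p)

theorem lpLocMem_const (hball : ∀ (x : X) (r : ℝ), m (Metric.ball x r) < ∞) (hp : 0 ≤ p)
    (c : ℝ) : LpLocMem m p (fun _ : X => c) :=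
  ⟨measurable_const, fun B _ hB => by
    rw [lpIntOn, setLIntegral_const]
    exact ENNReal.mul_lt_top (ENNReal.rpow_lt_top_of_nonneg hp ENNReal.ofReal_ne_top)
      (measure_lt_top_of_isBounded hball hB)⟩

theorem zero_mem_D_const (hball : ∀ (x : X) (r : ℝ), m (Metric.ball x r) < ∞) (hp : 0 ≤ p)
    (c : ℝ) : (fun _ => 0) ∈ S.D (fun _ : X => c) := by
  have hone := lpLocMem_const hball hp 1
  have h0 : (fun _ => 0) ∈ S.D (fun _ : X => 1) := by
    simpa using S.axiomA1 _ 0 hone (fun _ => zero_le_one) (LipschitzWith.const 1)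
  simpa using S.axiomA2 _ _ _ _ (fun _ => 0) c 0 hone hone h0 h0 measurable_const le_rfl
    (.of_forall fun _ => by simp)

theorem energyOn_le_lpIntOn {u g : X → ℝ} (hg : g ∈ S.D u) (B : Set X) :
    S.energyOn u B ≤ lpIntOn m p g B :=
  iInf₂_le g hg

theorem const_mem_sobolevClass (hball : ∀ (x : X) (r : ℝ), m (Metric.ball x r) < ∞)
    (hp : 0 < p) (c : ℝ) : (fun _ : X => c) ∈ S.SobolevClass := by
  refine ⟨lpLocMem_const hball hp.le c, ?_⟩
  calc S.energy (fun _ => c) ≤ lpIntOn m p (fun _ => 0) univ :=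
        S.energyOn_le_lpIntOn (S.zero_mem_D_const hball hp.le c) univ
    _ = 0 := lpIntOn_eq_zero_of_eqOn_zero hp MeasurableSet.univ fun _ _ => rfl
    _ < ∞ := ENNReal.zero_lt_top

theorem D_nonempty_of_mem_sobolevClass {u : X → ℝ} (hu : u ∈ S.SobolevClass) :
    (S.D u).Nonempty := by
  by_contra h
  have : S.energy u = ∞ := by
    simp [energy, energyOn, Set.not_nonempty_iff_eq_empty.mp h]
  exact hu.2.ne this

variable {S}

/-- Glue the zero pseudo-gradient of the constant `c` on `B` to any pseudo-gradient of `u`. -/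
theorem ShanmugalingamLocal.l1prop (hS : S.ShanmugalingamLocal)
    (hball : ∀ (x : X) (r : ℝ), m (Metric.ball x r) < ∞) (hp : 0 < p) : S.L1prop := by
  rintro u hu B hB ⟨c, hc⟩
  obtain ⟨g, hg⟩ := S.D_nonempty_of_mem_sobolevClass hu
  have hglued := hS _ (S.const_mem_sobolevClass hball hp c) u hu B hB
    (hc.mono fun _ hx => hx.symm) _ (S.zero_mem_D_const hball hp.le c) g hg
  refine le_antisymm ((S.energyOn_le_lpIntOn hglued B).trans_eq ?_) bot_le
  exact lpIntOn_eq_zero_of_eqOn_zero hp hB fun x hx => by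
    simp [Set.indicator_of_mem hx, Set.indicator_of_notMem (Set.notMem_compl_iff.mpr hx)]

/-- Gluing `h` on `{h < g}` to `g` elsewhere gives exactly `min g h`. -/
theorem ShanmugalingamLocal.l4prop (hS : S.ShanmugalingamLocal) : S.L4prop := by
  intro u hu g hg h hh
  have hglued := hS u hu u hu {x | h x < g x}
    (measurableSet_lt (S.measurable_of_mem u h hh) (S.measurable_of_mem u g hg))
    (.of_forall fun _ => rfl) h hh g hg
  convert hglued using 1
  ext x
  by_cases hx : h x < g x
  · simp [hx, hx.le]
  · simp [hx, not_lt.mp hx]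

/-- `min (Du) h` is a pseudo-gradient of energy at most that of `Du`, hence equal to `Du`. -/
theorem l5prop_of_l4prop (hp : 0 < p) (h4 : S.L4prop) : S.L5prop := by
  intro u hu g ⟨hg, hgLp, hgE⟩ h hh
  have hmin := h4 u hu g hg h hh
  have hmin0 : ∀ x, 0 ≤ min (g x) (h x) := fun x =>
    le_min (S.nonneg_of_mem u g hg x) (S.nonneg_of_mem u h hh x)
  have hmin_le : lpIntOn m p (fun x => min (g x) (h x)) univ ≤ lpIntOn m p g univ :=
    lpIntOn_mono hp.le (fun x => abs_le_abs_of_nonneg (hmin0 x) (min_le_left _ _)) univ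
  have heq := ae_eq_of_le_of_lpIntOn_le hp hmin0 (fun x => min_le_left _ _) hgLp.1
    (hmin_le.trans_lt hgLp.2).ne (hgE ▸ S.energyOn_le_lpIntOn hmin univ)
  filter_upwards [heq] with x hx
  exact hx ▸ min_le_right _ _

end DStructure

end AxSob

open AxSob AxSob.DStructure

theorem shanmugalingam_implies_pointwiseLocal_general {X : Type*} [MetricSpace X] [MeasurableSpace X]
    (m : MeasureTheory.Measure X)
    (hball : ∀ (x : X) (r : ℝ), m (Metric.ball x r) < ∞)
    (p : ℝ) (hp : 1 < p) (S : DStructure X m p)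
    (hS : S.ShanmugalingamLocal) : S.PointwiseLocal :=
  have hp0 : 0 < p := zero_lt_one.trans hp
  ⟨hS.l1prop hball hp0, l5prop_of_l4prop hp0 hS.l4prop⟩

/-- A D-structure that is strongly local in the sense of Shanmugalingam is
pointwise local, i.e. it satisfies properties L1 and L5. -/
theorem shanmugalingam_implies_pointwiseLocal {X : Type*} [MetricSpace X] [CompleteSpace X]
    [TopologicalSpace.SeparableSpace X] [MeasurableSpace X] [BorelSpace X]
    (m : MeasureTheory.Measure X) (hm : m ≠ 0)
    (hball : ∀ (x : X) (r : ℝ), m (Metric.ball x r) < ∞)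
    (p : ℝ) (hp : 1 < p) (S : DStructure X m p)
    (hS : S.ShanmugalingamLocal) : S.PointwiseLocal :=
  shanmugalingam_implies_pointwiseLocal_general m hball p hp S hS
end
end

section
/- Let (X,d,m) be a metric measure space, p ∈ (1,∞), and let D be a pointwise local D-structure on (X,d,m). Let u, v ∈ S^p(X) and let B ⊆ X be a Borel set such that u = v m-a.e. on B. Then the minimal pseudo-gradients satisfy D(u − v) = 0 m-a.e. on B and Du = Dv m-a.e. on B. -/
open Filter Set
open scoped ENNReal NNReal Topology

noncomputable section

/-! By L5 the minimal pseudo-gradient realises the energy on every Borel set, so L1 forces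
`D(u - v) = 0` a.e. where `u = v`. By A2, `Dv + D(u - v) ∈ D[u]` and `Du + D(u - v) ∈ D[v]`,
so L5 gives `|Du - Dv| ≤ D(u - v)` a.e. -/

namespace AxSob

open MeasureTheory

variable {X : Type*} [MeasurableSpace X] {m : Measure X} {p : ℝ}

theorem lpIntOn_le_two_rpow_mul_add (hp : 0 ≤ p) {f g h : X → ℝ} (hf : Measurable f)
    (hb : ∀ x, |h x| ≤ |f x| + |g x|) (s : Set X) :
    lpIntOn m p h s ≤ 2 ^ p * (lpIntOn m p f s + lpIntOn m p g s) := by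
  have hpoint : ∀ x, ENNReal.ofReal |h x| ^ p ≤
      2 ^ p * (ENNReal.ofReal |f x| ^ p + ENNReal.ofReal |g x| ^ p) := fun x =>
    calc ENNReal.ofReal |h x| ^ p
        ≤ (ENNReal.ofReal |f x| + ENNReal.ofReal |g x|) ^ p := by
          rw [← ENNReal.ofReal_add (abs_nonneg _) (abs_nonneg _)]
          gcongr
          exact hb x
      _ ≤ _ := ENNReal.add_rpow_le_two_rpow_mul_rpow_add_rpow _ _ hp
  calc lpIntOn m p h s
      ≤ ∫⁻ x in s, 2 ^ p * (ENNReal.ofReal |f x| ^ p + ENNReal.ofReal |g x| ^ p) ∂m :=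
        lintegral_mono hpoint
    _ = 2 ^ p * (lpIntOn m p f s + lpIntOn m p g s) := by
        rw [lintegral_const_mul' _ _ (ENNReal.rpow_ne_top_of_nonneg hp ENNReal.ofNat_ne_top),
          lintegral_add_left (hf.abs.ennreal_ofReal.pow_const p)]
        rfl

theorem ae_restrict_eq_zero_of_lpIntOn_eq_zero (hp : 0 < p) {g : X → ℝ} (hg : Measurable g)
    {B : Set X} (h : lpIntOn m p g B = 0) : ∀ᵐ x ∂(m.restrict B), g x = 0 := by
  filter_upwards [(lintegral_eq_zero_iff (hg.abs.ennreal_ofReal.pow_const p)).mp h] with x hx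
  simpa [ENNReal.rpow_eq_zero_iff, hp, not_lt_of_gt hp] using hx

variable [MetricSpace X]

theorem LpLocMem.sub (hp : 0 ≤ p) {u v : X → ℝ} (hu : LpLocMem m p u) (hv : LpLocMem m p v) :
    LpLocMem m p (fun x => u x - v x) :=
  ⟨hu.1.sub hv.1, fun B hB hBb =>
    (lpIntOn_le_two_rpow_mul_add hp hu.1 (fun x => abs_sub (u x) (v x)) B).trans_lt
      (ENNReal.mul_lt_top (ENNReal.rpow_lt_top_of_nonneg hp ENNReal.ofNat_ne_top)
        (ENNReal.add_lt_top.mpr ⟨hu.2 B hB hBb, hv.2 B hB hBb⟩))⟩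

namespace DStructure

variable (S : DStructure X m p)

theorem add_mem_of_eq_mul_add_mul {w u₁ u₂ g₁ g₂ : X → ℝ} (α₁ α₂ : ℝ)
    (hα₁ : |α₁| ≤ 1) (hα₂ : |α₂| ≤ 1)
    (hu₁ : LpLocMem m p u₁) (hu₂ : LpLocMem m p u₂) (hg₁ : g₁ ∈ S.D u₁) (hg₂ : g₂ ∈ S.D u₂)
    (hw : ∀ x, w x = α₁ * u₁ x + α₂ * u₂ x) : (fun x => g₁ x + g₂ x) ∈ S.D w := by
  have hg₁0 := S.nonneg_of_mem _ _ hg₁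
  have hg₂0 := S.nonneg_of_mem _ _ hg₂
  have hw' : w = fun x => α₁ * u₁ x + α₂ * u₂ x := funext hw
  subst hw'
  refine S.axiomA2 u₁ u₂ g₁ g₂ _ α₁ α₂ hu₁ hu₂ hg₁ hg₂
    ((S.measurable_of_mem _ _ hg₁).add (S.measurable_of_mem _ _ hg₂))
    (fun x => add_nonneg (hg₁0 x) (hg₂0 x)) (ae_of_all m fun x => ?_)
  exact add_le_add (mul_le_of_le_one_left (hg₁0 x) hα₁) (mul_le_of_le_one_left (hg₂0 x) hα₂)

theorem exists_mem_lpIntOn_lt_top {u : X → ℝ} (hu : u ∈ S.SobolevClass) :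
    ∃ g ∈ S.D u, lpIntOn m p g Set.univ < ∞ := by
  simpa only [energy, energyOn, iInf_lt_iff, exists_prop] using hu.2

theorem sub_mem_sobolevClass (hp : 0 ≤ p) {u v : X → ℝ} (hu : u ∈ S.SobolevClass)
    (hv : v ∈ S.SobolevClass) : (fun x => u x - v x) ∈ S.SobolevClass := by
  obtain ⟨gu, hgu, hgu_lt⟩ := S.exists_mem_lpIntOn_lt_top hu
  obtain ⟨gv, hgv, hgv_lt⟩ := S.exists_mem_lpIntOn_lt_top hv
  refine ⟨hu.1.sub hp hv.1, ?_⟩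
  calc S.energy (fun x => u x - v x)
      ≤ lpIntOn m p (fun x => gu x + gv x) Set.univ :=
        iInf₂_le _ (S.add_mem_of_eq_mul_add_mul 1 (-1) (by simp) (by simp) hu.1 hv.1 hgu hgv
          fun x => by ring)
    _ ≤ 2 ^ p * (lpIntOn m p gu Set.univ + lpIntOn m p gv Set.univ) :=
        lpIntOn_le_two_rpow_mul_add hp (S.measurable_of_mem _ _ hgu) (fun x => abs_add_le _ _) _
    _ < ∞ := ENNReal.mul_lt_top (ENNReal.rpow_lt_top_of_nonneg hp ENNReal.ofNat_ne_top)
        (ENNReal.add_lt_top.mpr ⟨hgu_lt, hgv_lt⟩)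

theorem IsMinimalPG.energyOn_eq {S : DStructure X m p} (hL5 : S.L5prop) (hp : 0 ≤ p)
    {u g : X → ℝ} (hu : u ∈ S.SobolevClass) (hg : S.IsMinimalPG u g) (B : Set X) :
    S.energyOn u B = lpIntOn m p g B := by
  refine le_antisymm (iInf₂_le g hg.1) (le_iInf₂ fun h hh => setLIntegral_mono_ae ?_ ?_)
  · exact ((S.measurable_of_mem _ _ hh).abs.ennreal_ofReal.pow_const p).aemeasurable
  · filter_upwards [hL5 u hu g hg h hh] with x hx _
    have hg0 : 0 ≤ g x := S.nonneg_of_mem _ _ hg.1 x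
    gcongr

theorem PointwiseLocal.l2prop {S : DStructure X m p} (hS : S.PointwiseLocal) (hp : 0 < p) :
    S.L2prop := fun u hu B hB hconst _ hg =>
  ae_restrict_eq_zero_of_lpIntOn_eq_zero hp hg.2.1.1
    ((hg.energyOn_eq hS.2 hp.le hu B).symm.trans (hS.1 u hu B hB hconst))

end DStructure

end AxSob

open AxSob AxSob.DStructure

theorem minimalPG_locality_general {X : Type*} [MetricSpace X] [MeasurableSpace X]
    (m : MeasureTheory.Measure X) (p : ℝ) (hp : 1 < p) (S : DStructure X m p)
    (hloc : S.PointwiseLocal)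
    (u v : X → ℝ) (hu : u ∈ S.SobolevClass) (hv : v ∈ S.SobolevClass)
    (B : Set X) (hB : MeasurableSet B) (huv : ∀ᵐ x ∂(m.restrict B), u x = v x)
    (guv gu gv : X → ℝ)
    (hguv : S.IsMinimalPG (fun x => u x - v x) guv)
    (hgu : S.IsMinimalPG u gu) (hgv : S.IsMinimalPG v gv) :
    (∀ᵐ x ∂(m.restrict B), guv x = 0) ∧ (∀ᵐ x ∂(m.restrict B), gu x = gv x) := by
  have hp0 : 0 < p := zero_lt_one.trans hp
  have hdiff := S.sub_mem_sobolevClass hp0.le hu hv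
  have hguv_zero : ∀ᵐ x ∂(m.restrict B), guv x = 0 :=
    hloc.l2prop hp0 _ hdiff B hB ⟨0, by filter_upwards [huv] with x hx; simp [hx]⟩ guv hguv
  have hgu_le : ∀ᵐ x ∂m, gu x ≤ gv x + guv x :=
    hloc.2 u hu gu hgu _ (S.add_mem_of_eq_mul_add_mul 1 1 (by simp) (by simp)
      hv.1 hdiff.1 hgv.1 hguv.1 fun x => by ring)
  have hgv_le : ∀ᵐ x ∂m, gv x ≤ gu x + guv x :=
    hloc.2 v hv gv hgv _ (S.add_mem_of_eq_mul_add_mul 1 (-1) (by simp) (by simp)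
      hu.1 hdiff.1 hgu.1 hguv.1 fun x => by ring)
  refine ⟨hguv_zero, ?_⟩
  filter_upwards [hguv_zero, MeasureTheory.ae_restrict_of_ae hgu_le,
    MeasureTheory.ae_restrict_of_ae hgv_le] with x hx0 hx1 hx2
  rw [hx0, add_zero] at hx1 hx2
  exact le_antisymm hx1 hx2

/-- For a pointwise local D-structure: if u, v in the Sobolev class coincide m-a.e. on
a Borel set B, then the minimal pseudo-gradient of u - v vanishes m-a.e. on B and the
minimal pseudo-gradients of u and of v coincide m-a.e. on B. -/
theorem minimalPG_locality {X : Type*} [MetricSpace X] [CompleteSpace X]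
    [TopologicalSpace.SeparableSpace X] [MeasurableSpace X] [BorelSpace X]
    (m : MeasureTheory.Measure X) (hm : m ≠ 0)
    (hball : ∀ (x : X) (r : ℝ), m (Metric.ball x r) < ∞)
    (p : ℝ) (hp : 1 < p) (S : DStructure X m p)
    (hloc : S.PointwiseLocal)
    (u v : X → ℝ) (hu : u ∈ S.SobolevClass) (hv : v ∈ S.SobolevClass)
    (B : Set X) (hB : MeasurableSet B) (huv : ∀ᵐ x ∂(m.restrict B), u x = v x)
    (guv gu gv : X → ℝ)
    (hguv : S.IsMinimalPG (fun x => u x - v x) guv)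
    (hgu : S.IsMinimalPG u gu) (hgv : S.IsMinimalPG v gv) :
    (∀ᵐ x ∂(m.restrict B), guv x = 0) ∧ (∀ᵐ x ∂(m.restrict B), gu x = gv x) :=
  minimalPG_locality_general m p hp S hloc u v hu hv B hB huv guv gu gv hguv hgu hgv
end
end
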